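/- arXiv:2111.01542 — 3 statements merged into one kernel-verified Lean document; each statement's English description precedes it below -/
import Mathlib

section
/- Assume Assumption 1 holds. Let ν be a finite nonnegative Borel measure on 𝒮, and let (k(j))_{j≥1} and (n(j))_{j≥1} be increasing sequences of positive integers with k(j) → ∞ such that Σ_{j≥1} ν{ S ∈ 𝒮⁺ : α_l(S) ≠ 0 for all l ≥ 1, and (Σ_{l>k(j)} α_l(S)²)^{1/2} ≤ 2δ_{n(j)} } < ∞. Then: (i) if C has finite rank q ≥ 1, then with probability 1, for all sufficiently large j one has i(Ĉ_{n(j)}, δ_{n(j)}) = q and q ≤ k(j) (so the procedure declares H_q eventually); (ii) there exists a ν-negligible set N₀ ⊆ 𝒮⁺ such that whenever C has infinite rank and C ∉ N₀, with probability 1, for all sufficiently large j one has i(Ĉ_{n(j)}, δ_{n(j)}) > k(j) (so the procedure declares H_∞ eventually). -/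
open MeasureTheory Filter

/-- Abstract singular-value data on the (Hilbert) space `𝒮` of Hilbert–Schmidt operators on a
separable infinite-dimensional real Hilbert space `H`.  `IsPos S` encodes `S ∈ 𝒮⁺` (nonnegative
self-adjoint), and `α S l` is the `(l+1)`-st singular value of `S` (so `α S 0 ≥ α S 1 ≥ … ≥ 0`,
listed with multiplicity).  The field `mirsky` encodes the Schmidt–Mirsky fact that
`S ↦ ‖S - Q_j(S)‖_𝒮 = (∑_{l > j} α_l(S)²)^{1/2}` (distance to the rank-`j` operators)
is `1`-Lipschitz in the Hilbert–Schmidt norm. -/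
structure SingularValueData (𝒮 : Type*) [NormedAddCommGroup 𝒮] [MeasurableSpace 𝒮] where
  IsPos : 𝒮 → Prop
  α : 𝒮 → ℕ → ℝ
  nonneg : ∀ S l, 0 ≤ α S l
  antitone : ∀ S l, α S (l + 1) ≤ α S l
  sq_summable : ∀ S, Summable fun l => α S l ^ 2
  mirsky : ∀ A B : 𝒮, ∀ j : ℕ,
    Real.sqrt (∑' l, α A (j + l) ^ 2) ≤ Real.sqrt (∑' l, α B (j + l) ^ 2) + ‖A - B‖
  measurable_alpha : ∀ l, Measurable fun S => α S l
  measurableSet_pos : MeasurableSet {S | IsPos S}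
  measurable_tail : ∀ j, Measurable fun S => Real.sqrt (∑' l, α S (j + l) ^ 2)

namespace SingularValueData

variable {𝒮 : Type*} [NormedAddCommGroup 𝒮] [MeasurableSpace 𝒮]

/-- `tail S j = ‖S - Q_j(S)‖_𝒮 = (∑_{l > j} α_l(S)²)^{1/2}` (singular values `1`-indexed). -/
noncomputable def tail (sv : SingularValueData 𝒮) (S : 𝒮) (j : ℕ) : ℝ :=
  Real.sqrt (∑' l, sv.α S (j + l) ^ 2)

/-- `i(S, δ) = min {j ≥ 1 : ‖S - Q_j(S)‖_𝒮 < δ}`. -/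
noncomputable def iDim (sv : SingularValueData 𝒮) (S : 𝒮) (δ : ℝ) : ℕ :=
  sInf {j | 1 ≤ j ∧ sv.tail S j < δ}

end SingularValueData

/-! The tail `‖S - Q_j(S)‖` is `1`-Lipschitz in `S` (Schmidt–Mirsky), so once
`‖Ĉ_n - C‖ < ℛ(n) ≤ δ_n` the estimated tail sits within `ℛ(n)` of the true one. If `C` has
rank `q`, its tail vanishes at `q` and is a positive constant at `q - 1`, while `δ_n → 0`;
hence `i(Ĉ_n, δ_n) = q` eventually. If `C` has infinite rank, Borel–Cantelli applied to the
summability hypothesis gives a `ν`-null set outside of which `tail C (k j) > 2 δ_{n(j)}`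
eventually, and then `tail Ĉ_{n(j)} (k j) > δ_{n(j)}`, which forces `i > k(j)`. -/

namespace SingularValueData

variable {𝒮 : Type*} [NormedAddCommGroup 𝒮] [MeasurableSpace 𝒮] (sv : SingularValueData 𝒮)

lemma summable_sq_alpha_add (S : 𝒮) (j : ℕ) : Summable fun l => sv.α S (j + l) ^ 2 := by
  simpa only [add_comm j] using (summable_nat_add_iff j).2 (sv.sq_summable S)

lemma tail_antitone (S : 𝒮) : Antitone (sv.tail S) := by
  intro m j hmj
  obtain ⟨d, rfl⟩ := Nat.exists_eq_add_of_le hmj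
  refine Real.sqrt_le_sqrt ?_
  exact (sv.summable_sq_alpha_add S (m + d)).tsum_le_tsum_of_inj (d + ·) (add_right_injective d)
    (fun _ _ => sq_nonneg _) (fun l => by rw [add_assoc]) (sv.summable_sq_alpha_add S m)

lemma tail_le_tail_add_norm_sub (A B : 𝒮) (j : ℕ) : sv.tail A j ≤ sv.tail B j + ‖A - B‖ :=
  sv.mirsky A B j

lemma tendsto_tail_atTop (S : 𝒮) : Tendsto (sv.tail S) atTop (nhds 0) := by
  have hrem : Tendsto (fun j => ∑' l, sv.α S (j + l) ^ 2) atTop (nhds 0) := by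
    simpa only [add_comm] using tendsto_sum_nat_add fun l => sv.α S l ^ 2
  exact (Real.continuous_sqrt.tendsto' 0 0 Real.sqrt_zero).comp hrem

lemma tail_eq_zero_of_alpha_eq_zero {S : 𝒮} {q : ℕ} (h : ∀ l, q ≤ l → sv.α S l = 0) :
    sv.tail S q = 0 := by
  simp [tail, h _ (Nat.le_add_right q _)]

lemma tail_pos_of_alpha_ne_zero {S : 𝒮} {j : ℕ} (h : sv.α S j ≠ 0) : 0 < sv.tail S j := by
  have hle : sv.α S j ^ 2 ≤ ∑' l, sv.α S (j + l) ^ 2 := by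
    simpa using (sv.summable_sq_alpha_add S j).le_tsum 0 fun l _ => sq_nonneg _
  exact Real.sqrt_pos.2 ((pow_pos ((sv.nonneg S j).lt_of_ne' h) 2).trans_le hle)

variable {S C : 𝒮} {r δ : ℝ}

lemma iDim_eq_of_tail_lt_of_le_tail {q : ℕ} (hq : 1 ≤ q) (hlt : sv.tail S q < δ)
    (hle : δ ≤ sv.tail S (q - 1)) : sv.iDim S δ = q := by
  have hmem : q ∈ {j | 1 ≤ j ∧ sv.tail S j < δ} := ⟨hq, hlt⟩
  refine le_antisymm (Nat.sInf_le hmem) ?_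
  obtain ⟨-, hinf⟩ := Nat.sInf_mem ⟨q, hmem⟩
  by_contra! hlt'
  exact (hle.trans (sv.tail_antitone S (Nat.le_pred_of_lt hlt'))).not_gt hinf

lemma lt_iDim_of_le_tail {k : ℕ} (hδ : 0 < δ) (hle : δ ≤ sv.tail S k) : k < sv.iDim S δ := by
  -- `sInf ∅ = 0`, so the infimum has to be shown to be attained
  have hne : {j | 1 ≤ j ∧ sv.tail S j < δ}.Nonempty :=
    ((eventually_ge_atTop 1).and
      ((sv.tendsto_tail_atTop S).eventually (eventually_lt_nhds hδ))).exists
  by_contra! hge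
  exact (hle.trans (sv.tail_antitone S hge)).not_gt (Nat.sInf_mem hne).2

lemma iDim_eq_of_norm_sub_lt {q : ℕ} (hq : 1 ≤ q) (hrank : ∀ l, q ≤ l → sv.α C l = 0)
    (hSC : ‖S - C‖ < r) (hrδ : r ≤ δ) (hgap : δ + r ≤ sv.tail C (q - 1)) :
    sv.iDim S δ = q := by
  refine sv.iDim_eq_of_tail_lt_of_le_tail hq ?_ ?_
  · have := sv.tail_le_tail_add_norm_sub S C q
    rw [sv.tail_eq_zero_of_alpha_eq_zero hrank] at this
    linarith
  · have := sv.tail_le_tail_add_norm_sub C S (q - 1)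
    rw [norm_sub_rev] at this
    linarith

lemma lt_iDim_of_norm_sub_lt {k : ℕ} (hSC : ‖S - C‖ < r) (hδ : 0 < δ)
    (hgap : δ + r ≤ sv.tail C k) : k < sv.iDim S δ := by
  refine sv.lt_iDim_of_le_tail hδ ?_
  have := sv.tail_le_tail_add_norm_sub C S k
  rw [norm_sub_rev] at this
  linarith

end SingularValueData

theorem detection_of_finite_expressibility_in_some_basis_general
    {𝒮 : Type*} [NormedAddCommGroup 𝒮] [MeasurableSpace 𝒮]
    (sv : SingularValueData 𝒮)
    {Ω : Type*} [MeasurableSpace Ω] (ℙ : Measure Ω)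
    (Chat : ℕ → Ω → 𝒮)
    (C : 𝒮) (hC : sv.IsPos C)
    (R : ℕ → ℝ) (hRpos : ∀ n, 0 < R n)
    (hRlim : Tendsto R atTop (nhds 0))
    (hrate : ∀ᵐ ω ∂ℙ, ∀ᶠ n in atTop, ‖Chat n ω - C‖ < R n)
    (ε : ℝ) (hε : 0 < ε) (δ : ℕ → ℝ) (hδ : ∀ n, δ n = (1 + ε) * R n)
    (ν : Measure 𝒮)
    (n k : ℕ → ℕ) (hn : StrictMono n)
    (hktop : Tendsto k atTop atTop)
    (hsum : ∑' j, ν {S | sv.IsPos S ∧ (∀ l, sv.α S l ≠ 0) ∧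
      sv.tail S (k j) ≤ 2 * δ (n j)} < ⊤) :
    (∀ q : ℕ, 1 ≤ q → sv.α C (q - 1) ≠ 0 → (∀ l, q ≤ l → sv.α C l = 0) →
      ∀ᵐ ω ∂ℙ, ∀ᶠ j in atTop,
        sv.iDim (Chat (n j) ω) (δ (n j)) = q ∧ q ≤ k j) ∧
    (∃ N₀ : Set 𝒮, ν N₀ = 0 ∧ N₀ ⊆ {S | sv.IsPos S} ∧
      ((∀ l, sv.α C l ≠ 0) → C ∉ N₀ →
        ∀ᵐ ω ∂ℙ, ∀ᶠ j in atTop, k j < sv.iDim (Chat (n j) ω) (δ (n j)))) := by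
  have hclose : ∀ᵐ ω ∂ℙ, ∀ᶠ j in atTop, ‖Chat (n j) ω - C‖ < R (n j) :=
    hrate.mono fun ω hω => hn.tendsto_atTop.eventually hω
  have hRδ : ∀ m, R m ≤ δ m := fun m => by
    rw [hδ]; exact le_mul_of_one_le_left (hRpos m).le (by linarith)
  refine ⟨fun q hq hαq hrank => ?_, ?_⟩
  · have hδR : Tendsto (fun m => δ m + R m) atTop (nhds 0) := by
      simpa [hδ] using (hRlim.const_mul (1 + ε)).add hRlim
    have hgap : ∀ᶠ j in atTop, δ (n j) + R (n j) ≤ sv.tail C (q - 1) :=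
      hn.tendsto_atTop.eventually
        ((hδR.eventually (eventually_lt_nhds (sv.tail_pos_of_alpha_ne_zero hαq))).mono
          fun _ => le_of_lt)
    filter_upwards [hclose] with ω hω
    filter_upwards [hω, hgap, hktop.eventually_ge_atTop q] with j hj hgapj hqk
    exact ⟨sv.iDim_eq_of_norm_sub_lt hq hrank hj (hRδ _) hgapj, hqk⟩
  · set B : ℕ → Set 𝒮 := fun j =>
      {S | sv.IsPos S ∧ (∀ l, sv.α S l ≠ 0) ∧ sv.tail S (k j) ≤ 2 * δ (n j)}
    refine ⟨limsup B atTop, measure_limsup_atTop_eq_zero hsum.ne, fun S hS => ?_,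
      fun hCinf hCN => ?_⟩
    · obtain ⟨j, hSj⟩ := (mem_limsup_iff_frequently_mem.1 hS).exists
      exact hSj.1
    have hgap : ∀ᶠ j in atTop, 2 * δ (n j) < sv.tail C (k j) :=
      (not_frequently.1 (mem_limsup_iff_frequently_mem.not.1 hCN)).mono
        fun j hj => lt_of_not_ge fun hle => hj ⟨hC, hCinf, hle⟩
    filter_upwards [hclose] with ω hω
    filter_upwards [hω, hgap] with j hj hgapj
    exact sv.lt_iDim_of_norm_sub_lt hj ((hRpos _).trans_le (hRδ _)) (by linarith [hRδ (n j)])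

/-- **Theorem 1.**  Under Assumption 1, let `ν` be a finite (Borel) measure on
`𝒮`, and let `k(j)`, `n(j)` be increasing sequences of positive integers with `k(j) → ∞`
satisfying the summability condition
`∑_j ν {S ∈ 𝒮⁺ : α_l(S) ≠ 0 ∀ l, (∑_{l > k(j)} α_l(S)²)^{1/2} ≤ 2 δ_{n(j)}} < ∞`.
Then (i) if `C` has finite rank `q ≥ 1`, almost surely the procedure eventually declares
`H_q` (i.e. `i(Ĉ_{n(j)}, δ_{n(j)}) = q ≤ k(j)` for all large `j`); and (ii) there is a
`ν`-negligible set `N₀ ⊆ 𝒮⁺` such that if `C` has infinite rank and `C ∉ N₀`, almost surely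
the procedure eventually declares `H_∞` (i.e. `i(Ĉ_{n(j)}, δ_{n(j)}) > k(j)` for all large
`j`). -/
theorem detection_of_finite_expressibility_in_some_basis
    {𝒮 : Type*} [NormedAddCommGroup 𝒮] [MeasurableSpace 𝒮] [BorelSpace 𝒮]
    (sv : SingularValueData 𝒮)
    {Ω : Type*} [MeasurableSpace Ω] (ℙ : Measure Ω) [IsProbabilityMeasure ℙ]
    (Chat : ℕ → Ω → 𝒮) (hChat : ∀ n, Measurable (Chat n))
    (C : 𝒮) (hC : sv.IsPos C)
    (R : ℕ → ℝ) (hRpos : ∀ n, 0 < R n) (hRanti : StrictAnti R)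
    (hRlim : Tendsto R atTop (nhds 0))
    (hrate : ∀ᵐ ω ∂ℙ, ∀ᶠ n in atTop, ‖Chat n ω - C‖ < R n)
    (ε : ℝ) (hε : 0 < ε) (δ : ℕ → ℝ) (hδ : ∀ n, δ n = (1 + ε) * R n)
    (ν : Measure 𝒮) [IsFiniteMeasure ν]
    (n k : ℕ → ℕ) (hn : StrictMono n) (hkmono : Monotone k)
    (hktop : Tendsto k atTop atTop)
    (hn1 : ∀ j, 1 ≤ n j) (hk1 : ∀ j, 1 ≤ k j)
    (hsum : ∑' j, ν {S | sv.IsPos S ∧ (∀ l, sv.α S l ≠ 0) ∧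
      sv.tail S (k j) ≤ 2 * δ (n j)} < ⊤) :
    (∀ q : ℕ, 1 ≤ q → sv.α C (q - 1) ≠ 0 → (∀ l, q ≤ l → sv.α C l = 0) →
      ∀ᵐ ω ∂ℙ, ∀ᶠ j in atTop,
        sv.iDim (Chat (n j) ω) (δ (n j)) = q ∧ q ≤ k j) ∧
    (∃ N₀ : Set 𝒮, ν N₀ = 0 ∧ N₀ ⊆ {S | sv.IsPos S} ∧
      ((∀ l, sv.α C l ≠ 0) → C ∉ N₀ →
        ∀ᵐ ω ∂ℙ, ∀ᶠ j in atTop, k j < sv.iDim (Chat (n j) ω) (δ (n j)))) :=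
  detection_of_finite_expressibility_in_some_basis_general sv ℙ Chat C hC R hRpos hRlim hrate ε hε δ
    hδ ν n k hn hktop hsum
end

section
/- Assume Assumption 1 holds. Let ν be a finite nonnegative Borel measure on 𝒮, and let (k(j))_{j≥1} and (n(j))_{j≥1} be increasing sequences of positive integers with k(j) → ∞ such that Σ_{j≥1} ν{ S ∈ 𝒮 ∖ ∪_{l≥1} W_l : inf_{w ∈ W_{k(j)}} ‖S − w‖_𝒮 ≤ 2δ_{n(j)} } < ∞. Then: (i) if C = Σ_{l=1}^{q} a_l Ψ_l with a_q ≠ 0 for some finite q ≥ 1, then with probability 1, for all sufficiently large j one has ι(Ĉ_{n(j)}, δ_{n(j)}) = q and q ≤ k(j) (so the procedure declares H_q eventually); (ii) there exists a ν-negligible set N₀ ⊆ 𝒮 such that whenever ⟨C, Ψ_l⟩_𝒮 ≠ 0 for infinitely many l and C ∉ N₀, with probability 1, for all sufficiently large j one has ι(Ĉ_{n(j)}, δ_{n(j)}) > k(j) (so the procedure declares H_∞ eventually). -/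
/-!
For part (i), the residual `S - P_j S` is a linear contraction, so residual norms of `Ĉ_n` and `C`
differ by at most `‖Ĉ_n - C‖ < R(n)`. The residual of `C` vanishes from `j = q` on and is at
least `|⟨C, Ψ_q⟩|` before, so once `(2 + ε) R(n) < |⟨C, Ψ_q⟩|` the threshold `δ_n` is first crossed
at `q`. For part (ii), take `N₀` to be the limsup of the sets in the summability hypothesis; it is
`ν`-null by Borel–Cantelli. Off `N₀` and outside `⋃ W_l`, eventually `d(C, W_{k(j)}) > 2 δ_{n(j)}`,
hence `d(Ĉ_{n(j)}, W_{k(j)}) > δ_{n(j)}`, and no projection `P_m Ĉ_{n(j)} ∈ W_{k(j)}` with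
`m ≤ k(j)` is `δ_{n(j)}`-close.
-/

open MeasureTheory Filter
open scoped RealInnerProductSpace

variable {𝒮 : Type*} [NormedAddCommGroup 𝒮] [InnerProductSpace ℝ 𝒮]

/-- `P_j(S) = ∑_{l=1}^{j} ⟨S, Ψ_l⟩ Ψ_l`, the orthogonal projection of `S` onto
`W_j = span {Ψ_1, …, Ψ_j}` (indices `0, …, j-1` in `0`-indexed notation). -/
noncomputable def basisProj (Ψ : HilbertBasis ℕ ℝ 𝒮) (j : ℕ) (S : 𝒮) : 𝒮 :=
  ∑ l ∈ Finset.range j, ⟪S, Ψ l⟫ • Ψ l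

/-- `W_j = span {Ψ_1, …, Ψ_j}` (i.e. the span of `Ψ 0, …, Ψ (j-1)`). -/
def basisSpan (Ψ : HilbertBasis ℕ ℝ 𝒮) (j : ℕ) : Submodule ℝ 𝒮 :=
  Submodule.span ℝ ((fun l => Ψ l) '' Set.Iio j)

/-- `ι(S, δ) = min {j ≥ 1 : ‖S - P_j(S)‖_𝒮 < δ}`. -/
noncomputable def iotaDim (Ψ : HilbertBasis ℕ ℝ 𝒮) (S : 𝒮) (δ : ℝ) : ℕ :=
  sInf {j | 1 ≤ j ∧ ‖S - basisProj Ψ j S‖ < δ}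

open Topology

section BasisProj

variable (Ψ : HilbertBasis ℕ ℝ 𝒮)

lemma inner_basisProj (j m : ℕ) (S : 𝒮) :
    ⟪basisProj Ψ j S, Ψ m⟫ = if m < j then ⟪S, Ψ m⟫ else 0 := by
  simp only [basisProj, sum_inner, real_inner_smul_left, orthonormal_iff_ite.mp Ψ.orthonormal,
    mul_ite, mul_one, mul_zero, Finset.sum_ite_eq', Finset.mem_range]

lemma inner_sub_basisProj (j m : ℕ) (S : 𝒮) :
    ⟪S - basisProj Ψ j S, Ψ m⟫ = if m < j then 0 else ⟪S, Ψ m⟫ := by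
  rw [inner_sub_left, inner_basisProj]
  split_ifs <;> simp

lemma basisProj_sub (j : ℕ) (S T : 𝒮) :
    basisProj Ψ j (S - T) = basisProj Ψ j S - basisProj Ψ j T := by
  simp [basisProj, inner_sub_left, sub_smul, Finset.sum_sub_distrib]

lemma inner_sub_basisProj_basisProj (j : ℕ) (S : 𝒮) :
    ⟪S - basisProj Ψ j S, basisProj Ψ j S⟫ = 0 := by
  refine (inner_sum (Finset.range j) _ _).trans (Finset.sum_eq_zero fun l hl => ?_)
  rw [real_inner_smul_right, inner_sub_basisProj, if_pos (Finset.mem_range.mp hl), mul_zero]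

lemma norm_sub_basisProj_le (j : ℕ) (S : 𝒮) : ‖S - basisProj Ψ j S‖ ≤ ‖S‖ := by
  have hpyth := norm_add_sq_real (S - basisProj Ψ j S) (basisProj Ψ j S)
  rw [sub_add_cancel, inner_sub_basisProj_basisProj, mul_zero, add_zero] at hpyth
  exact (sq_le_sq₀ (norm_nonneg _) (norm_nonneg _)).mp
    (by rw [hpyth]; exact le_add_of_nonneg_right (sq_nonneg _))

lemma norm_sub_basisProj_le_add (j : ℕ) (S T : 𝒮) :
    ‖S - basisProj Ψ j S‖ ≤ ‖T - basisProj Ψ j T‖ + ‖S - T‖ := by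
  have hsplit : S - basisProj Ψ j S
      = (T - basisProj Ψ j T) + ((S - T) - basisProj Ψ j (S - T)) := by
    rw [basisProj_sub]; abel
  rw [hsplit]
  exact (norm_add_le _ _).trans (add_le_add le_rfl (norm_sub_basisProj_le Ψ j _))

lemma abs_inner_le_norm_sub_basisProj {j m : ℕ} (h : j ≤ m) (S : 𝒮) :
    |⟪S, Ψ m⟫| ≤ ‖S - basisProj Ψ j S‖ := by
  have hcoeff := inner_sub_basisProj Ψ j m S
  rw [if_neg (Nat.not_lt.mpr h)] at hcoeff
  simpa [hcoeff, Ψ.orthonormal.1 m] using abs_real_inner_le_norm (S - basisProj Ψ j S) (Ψ m)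

lemma hasSum_inner_smul (S : 𝒮) : HasSum (fun l => ⟪S, Ψ l⟫ • Ψ l) S := by
  simpa [Ψ.repr_apply_apply, real_inner_comm] using Ψ.hasSum_repr S

lemma basisProj_eq_self {j : ℕ} {S : 𝒮} (hS : ∀ l, j ≤ l → ⟪S, Ψ l⟫ = 0) :
    basisProj Ψ j S = S := by
  refine (hasSum_sum_of_ne_finset_zero fun l hl => ?_).unique (hasSum_inner_smul Ψ S)
  rw [hS l (Nat.le_of_not_lt (hl ∘ Finset.mem_range.mpr)), zero_smul]

lemma tendsto_norm_sub_basisProj (S : 𝒮) :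
    Tendsto (fun j => ‖S - basisProj Ψ j S‖) atTop (𝓝 0) := by
  simpa [basisProj] using ((hasSum_inner_smul Ψ S).tendsto_sum_nat.const_sub S).norm

lemma basisProj_mem_basisSpan {m j : ℕ} (h : m ≤ j) (S : 𝒮) :
    basisProj Ψ m S ∈ basisSpan Ψ j :=
  Submodule.sum_mem _ fun l hl => Submodule.smul_mem _ _ <|
    Submodule.subset_span ⟨l, (Finset.mem_range.mp hl).trans_le h, rfl⟩

lemma inner_eq_zero_of_mem_basisSpan {w : 𝒮} {l m : ℕ} (hw : w ∈ basisSpan Ψ l) (hm : l ≤ m) :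
    ⟪w, Ψ m⟫ = 0 := by
  induction hw using Submodule.span_induction with
  | mem x hx =>
    obtain ⟨i, hi, rfl⟩ := hx
    exact Ψ.orthonormal.2 ((Set.mem_Iio.mp hi).trans_le hm).ne
  | zero => simp
  | add x y _ _ hx hy => rw [inner_add_left, hx, hy, add_zero]
  | smul c x _ hx => rw [real_inner_smul_left, hx, mul_zero]

lemma notMem_basisSpan_of_infinite {S : 𝒮} (hS : {l | ⟪S, Ψ l⟫ ≠ 0}.Infinite) (l : ℕ) :
    S ∉ basisSpan Ψ l := fun hmem =>
  let ⟨_, hm, hlm⟩ := hS.exists_gt l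
  hm (inner_eq_zero_of_mem_basisSpan Ψ hmem hlm.le)

end BasisProj

section IotaDim

variable (Ψ : HilbertBasis ℕ ℝ 𝒮) {S C : 𝒮} {δ : ℝ}

lemma iotaDim_eq_of_norm_sub_lt {q : ℕ} (hq : 1 ≤ q) (hC : ∀ l, q ≤ l → ⟪C, Ψ l⟫ = 0)
    (hSC : ‖S - C‖ < δ) (hgap : δ + ‖S - C‖ ≤ |⟪C, Ψ (q - 1)⟫|) :
    iotaDim Ψ S δ = q := by
  refine IsLeast.csInf_eq ⟨⟨hq, ?_⟩, fun m ⟨hm, hmδ⟩ => ?_⟩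
  · have h := norm_sub_basisProj_le_add Ψ q S C
    rw [basisProj_eq_self Ψ hC, sub_self, norm_zero, zero_add] at h
    exact h.trans_lt hSC
  · by_contra! hmq
    have hcoeff := abs_inner_le_norm_sub_basisProj Ψ (Order.le_sub_one_of_lt hmq) C
    have hres := norm_sub_basisProj_le_add Ψ m C S
    rw [norm_sub_rev C S] at hres
    linarith

lemma lt_iotaDim_of_two_mul_lt_infDist {k : ℕ} (hSC : ‖S - C‖ < δ)
    (hfar : 2 * δ < Metric.infDist C (basisSpan Ψ k : Set 𝒮)) :
    k < iotaDim Ψ S δ := by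
  have hδ : 0 < δ := (norm_nonneg _).trans_lt hSC
  have hne : {m | 1 ≤ m ∧ ‖S - basisProj Ψ m S‖ < δ}.Nonempty :=
    (((tendsto_norm_sub_basisProj Ψ S).eventually_lt_const hδ).and
      (eventually_ge_atTop 1)).exists.imp fun _ h => ⟨h.2, h.1⟩
  have hmem : iotaDim Ψ S δ ∈ {m | 1 ≤ m ∧ ‖S - basisProj Ψ m S‖ < δ} := Nat.sInf_mem hne
  by_contra! hle
  have hnear :
      Metric.infDist S (basisSpan Ψ k : Set 𝒮) ≤ ‖S - basisProj Ψ (iotaDim Ψ S δ) S‖ := by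
    simpa [dist_eq_norm] using Metric.infDist_le_dist_of_mem (x := S)
      (basisProj_mem_basisSpan Ψ hle S : basisProj Ψ _ S ∈ (basisSpan Ψ k : Set 𝒮))
  have htri : Metric.infDist C (basisSpan Ψ k : Set 𝒮)
      ≤ Metric.infDist S (basisSpan Ψ k : Set 𝒮) + ‖S - C‖ := by
    simpa [dist_eq_norm, norm_sub_rev] using
      Metric.infDist_le_infDist_add_dist (x := C) (y := S) (s := (basisSpan Ψ k : Set 𝒮))
  linarith [hmem.2]

end IotaDim

theorem detection_of_finite_expressibility_in_given_basis_general
    {𝒮 : Type*} [NormedAddCommGroup 𝒮] [InnerProductSpace ℝ 𝒮]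
    {Ω : Type*} [MeasurableSpace Ω] (ℙ : Measure Ω)
    [MeasurableSpace 𝒮]
    (Ψ : HilbertBasis ℕ ℝ 𝒮)
    (Chat : ℕ → Ω → 𝒮)
    (C : 𝒮)
    (R : ℕ → ℝ)
    (hRlim : Tendsto R atTop (nhds 0))
    (hrate : ∀ᵐ ω ∂ℙ, ∀ᶠ n in atTop, ‖Chat n ω - C‖ < R n)
    (ε : ℝ) (hε : 0 < ε) (δ : ℕ → ℝ) (hδ : ∀ n, δ n = (1 + ε) * R n)
    (ν : Measure 𝒮)
    (n k : ℕ → ℕ) (hn : StrictMono n)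
    (hktop : Tendsto k atTop atTop)
    (hsum : ∑' j, ν {S | (∀ l : ℕ, S ∉ basisSpan Ψ l) ∧
      Metric.infDist S (basisSpan Ψ (k j) : Set 𝒮) ≤ 2 * δ (n j)} < ⊤) :
    (∀ q : ℕ, 1 ≤ q → ⟪C, Ψ (q - 1)⟫ ≠ 0 → (∀ l, q ≤ l → ⟪C, Ψ l⟫ = 0) →
      ∀ᵐ ω ∂ℙ, ∀ᶠ j in atTop,
        iotaDim Ψ (Chat (n j) ω) (δ (n j)) = q ∧ q ≤ k j) ∧
    (∃ N₀ : Set 𝒮, ν N₀ = 0 ∧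
      ({l : ℕ | ⟪C, Ψ l⟫ ≠ 0}.Infinite → C ∉ N₀ →
        ∀ᵐ ω ∂ℙ, ∀ᶠ j in atTop, k j < iotaDim Ψ (Chat (n j) ω) (δ (n j)))) := by
  have hclose : ∀ᵐ ω ∂ℙ, ∀ᶠ j in atTop, ‖Chat (n j) ω - C‖ < R (n j) :=
    hrate.mono fun _ hω => hn.tendsto_atTop.eventually hω
  have hRδ : ∀ m, 0 < R m → R m < δ m := fun m hm => by rw [hδ]; nlinarith
  refine ⟨fun q hq hCq hC => ?_, ?_⟩
  · have hsmall : ∀ᶠ j in atTop, (2 + ε) * R (n j) < |⟪C, Ψ (q - 1)⟫| := by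
      have hlim := (hRlim.comp hn.tendsto_atTop).const_mul (2 + ε)
      rw [mul_zero] at hlim
      exact hlim.eventually_lt_const (abs_pos.mpr hCq)
    filter_upwards [hclose] with ω hω
    filter_upwards [hω, hsmall, hktop.eventually_ge_atTop q] with j hSC hj hqk
    have hR := hRδ _ ((norm_nonneg _).trans_lt hSC)
    refine ⟨iotaDim_eq_of_norm_sub_lt Ψ hq hC (hSC.trans hR) ?_, hqk⟩
    rw [hδ] at hR ⊢
    linarith
  · refine ⟨limsup (fun j => {S | (∀ l : ℕ, S ∉ basisSpan Ψ l) ∧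
        Metric.infDist S (basisSpan Ψ (k j) : Set 𝒮) ≤ 2 * δ (n j)}) atTop,
      measure_limsup_atTop_eq_zero hsum.ne, fun hinf hCN => ?_⟩
    rw [mem_limsup_iff_frequently_mem, not_frequently] at hCN
    have hCfar : ∀ᶠ j in atTop, 2 * δ (n j) < Metric.infDist C (basisSpan Ψ (k j) : Set 𝒮) :=
      hCN.mono fun _ hj => lt_of_not_ge fun hle =>
        hj ⟨notMem_basisSpan_of_infinite Ψ hinf, hle⟩
    filter_upwards [hclose] with ω hω
    filter_upwards [hω, hCfar] with j hSC hj
    exact lt_iotaDim_of_two_mul_lt_infDist Ψ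
      (hSC.trans (hRδ _ ((norm_nonneg _).trans_lt hSC))) hj

/-- **Theorem 2.**  Under Assumption 1, let `ν` be a finite (Borel) measure on
`𝒮` and let `k(j)`, `n(j)` be increasing sequences of positive integers with `k(j) → ∞`
satisfying `∑_j ν {S ∈ 𝒮 ∖ ⋃_l W_l : inf_{w ∈ W_{k(j)}} ‖S - w‖ ≤ 2 δ_{n(j)}} < ∞`.
Then (i) if `C = ∑_{l=1}^{q} a_l Ψ_l` with `a_q ≠ 0` for some finite `q ≥ 1`, almost surely
`ι(Ĉ_{n(j)}, δ_{n(j)}) = q ≤ k(j)` for all large `j`; and (ii) there is a `ν`-negligible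
`N₀ ⊆ 𝒮` such that if `⟨C, Ψ_l⟩ ≠ 0` for infinitely many `l` and `C ∉ N₀`, almost surely
`ι(Ĉ_{n(j)}, δ_{n(j)}) > k(j)` for all large `j`. -/
theorem detection_of_finite_expressibility_in_given_basis
    {𝒮 : Type*} [NormedAddCommGroup 𝒮] [InnerProductSpace ℝ 𝒮]
    {Ω : Type*} [MeasurableSpace Ω] (ℙ : Measure Ω) [IsProbabilityMeasure ℙ]
    [MeasurableSpace 𝒮] [BorelSpace 𝒮]
    (Ψ : HilbertBasis ℕ ℝ 𝒮)
    (Chat : ℕ → Ω → 𝒮) (hChat : ∀ n, Measurable (Chat n))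
    (C : 𝒮)
    (R : ℕ → ℝ) (hRpos : ∀ n, 0 < R n) (hRanti : StrictAnti R)
    (hRlim : Tendsto R atTop (nhds 0))
    (hrate : ∀ᵐ ω ∂ℙ, ∀ᶠ n in atTop, ‖Chat n ω - C‖ < R n)
    (ε : ℝ) (hε : 0 < ε) (δ : ℕ → ℝ) (hδ : ∀ n, δ n = (1 + ε) * R n)
    (ν : Measure 𝒮) [IsFiniteMeasure ν]
    (n k : ℕ → ℕ) (hn : StrictMono n) (hkmono : Monotone k)
    (hktop : Tendsto k atTop atTop)
    (hn1 : ∀ j, 1 ≤ n j) (hk1 : ∀ j, 1 ≤ k j)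
    (hsum : ∑' j, ν {S | (∀ l : ℕ, S ∉ basisSpan Ψ l) ∧
      Metric.infDist S (basisSpan Ψ (k j) : Set 𝒮) ≤ 2 * δ (n j)} < ⊤) :
    (∀ q : ℕ, 1 ≤ q → ⟪C, Ψ (q - 1)⟫ ≠ 0 → (∀ l, q ≤ l → ⟪C, Ψ l⟫ = 0) →
      ∀ᵐ ω ∂ℙ, ∀ᶠ j in atTop,
        iotaDim Ψ (Chat (n j) ω) (δ (n j)) = q ∧ q ≤ k j) ∧
    (∃ N₀ : Set 𝒮, ν N₀ = 0 ∧
      ({l : ℕ | ⟪C, Ψ l⟫ ≠ 0}.Infinite → C ∉ N₀ →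
        ∀ᵐ ω ∂ℙ, ∀ᶠ j in atTop, k j < iotaDim Ψ (Chat (n j) ω) (δ (n j)))) :=
  detection_of_finite_expressibility_in_given_basis_general ℙ Ψ Chat C R hRlim hrate ε hε δ hδ ν n k
    hn hktop hsum
end

section
/- Assume Assumption 1 holds. If ⟨C, Ψ_l⟩_𝒮 ≠ 0 for infinitely many l, then with probability 1, ι(Ĉ_n, δ_n) → ∞ as n → ∞. -/
open MeasureTheory Filter
open scoped RealInnerProductSpace

variable {𝒮 : Type*} [NormedAddCommGroup 𝒮] [InnerProductSpace ℝ 𝒮]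

/-! For fixed `J`, the residuals `‖Ĉ_n - P_j Ĉ_n‖`, `j < J`, converge to `‖C - P_j C‖`, which is
positive because `C` has nonzero coefficients beyond every `j`. Since `δ_n → 0`, they eventually
exceed `δ_n`, and then `ι(Ĉ_n, δ_n) ≥ J`. -/

open scoped Topology

namespace HilbertBasis

variable (Ψ : HilbertBasis ℕ ℝ 𝒮)

theorem continuous_basisProj (j : ℕ) : Continuous (basisProj Ψ j) := by
  unfold basisProj
  fun_prop

theorem tendsto_basisProj (S : 𝒮) : Tendsto (fun j => basisProj Ψ j S) atTop (𝓝 S) := by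
  convert (Ψ.hasSum_repr S).tendsto_sum_nat using 2 with j
  refine Finset.sum_congr rfl fun l _ => ?_
  rw [Ψ.repr_apply_apply, real_inner_comm]

theorem inner_basisProj_of_le {j l : ℕ} (hjl : j ≤ l) (S : 𝒮) : ⟪basisProj Ψ j S, Ψ l⟫ = 0 := by
  simp only [basisProj, sum_inner, real_inner_smul_left]
  refine Finset.sum_eq_zero fun k hk => ?_
  rw [Ψ.orthonormal.inner_eq_zero (Finset.mem_range.1 hk |>.trans_le hjl).ne, mul_zero]

theorem basisProj_ne_self {C : 𝒮} (hinf : {l : ℕ | ⟪C, Ψ l⟫ ≠ 0}.Infinite) (j : ℕ) :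
    basisProj Ψ j C ≠ C := by
  obtain ⟨l, hl, hjl⟩ := hinf.exists_gt j
  intro h
  exact hl (h ▸ Ψ.inner_basisProj_of_le hjl.le C)

theorem le_iotaDim {S : 𝒮} {δ : ℝ} (hδ : 0 < δ) {J : ℕ}
    (hJ : ∀ j < J, δ ≤ ‖S - basisProj Ψ j S‖) : J ≤ iotaDim Ψ S δ := by
  have hsmall : ∀ᶠ j in atTop, ‖S - basisProj Ψ j S‖ < δ := by
    have := (tendsto_const_nhds (x := S)).sub (Ψ.tendsto_basisProj S)
    rw [sub_self] at this
    exact (tendsto_norm_zero.comp this).eventually_lt_const hδ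
  obtain ⟨j, hj, hj1⟩ := (hsmall.and (eventually_ge_atTop 1)).exists
  refine le_csInf ⟨j, hj1, hj⟩ fun i ⟨_, hi⟩ => ?_
  by_contra! hiJ
  exact (hJ i hiJ).not_gt hi

theorem tendsto_iotaDim_atTop {C : 𝒮} (hinf : {l : ℕ | ⟪C, Ψ l⟫ ≠ 0}.Infinite)
    {S : ℕ → 𝒮} (hS : Tendsto S atTop (𝓝 C)) {δ : ℕ → ℝ} (hδ : Tendsto δ atTop (𝓝 0))
    (hδpos : ∀ᶠ n in atTop, 0 < δ n) :
    Tendsto (fun n => iotaDim Ψ (S n) (δ n)) atTop atTop := by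
  refine tendsto_atTop.2 fun J => ?_
  have hresidual : ∀ j, ∀ᶠ n in atTop, δ n < ‖S n - basisProj Ψ j (S n)‖ := fun j =>
    hδ.eventually_lt ((hS.sub ((Ψ.continuous_basisProj j).tendsto C |>.comp hS)).norm)
      (norm_pos_iff.2 (sub_ne_zero.2 (Ψ.basisProj_ne_self hinf j).symm))
  have hall : ∀ᶠ n in atTop, ∀ j ∈ Finset.range J, δ n < ‖S n - basisProj Ψ j (S n)‖ :=
    (eventually_all_finset _).2 fun j _ => hresidual j
  filter_upwards [hδpos, hall] with n hpos hres
  exact Ψ.le_iotaDim hpos fun j hj => (hres j (Finset.mem_range.2 hj)).le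

end HilbertBasis

theorem infinite_expansion_iota_tendsto_atTop_general
    {𝒮 : Type*} [NormedAddCommGroup 𝒮] [InnerProductSpace ℝ 𝒮]
    {Ω : Type*} [MeasurableSpace Ω] (ℙ : Measure Ω)
    (Ψ : HilbertBasis ℕ ℝ 𝒮)
    (Chat : ℕ → Ω → 𝒮)
    (C : 𝒮)
    (R : ℕ → ℝ)
    (hRlim : Tendsto R atTop (nhds 0))
    (hrate : ∀ᵐ ω ∂ℙ, ∀ᶠ n in atTop, ‖Chat n ω - C‖ < R n)
    (ε : ℝ) (hε : 0 < ε) (δ : ℕ → ℝ) (hδ : ∀ n, δ n = (1 + ε) * R n)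
    (hinf : {l : ℕ | ⟪C, Ψ l⟫ ≠ 0}.Infinite) :
    ∀ᵐ ω ∂ℙ, Tendsto (fun n => iotaDim Ψ (Chat n ω) (δ n)) atTop atTop := by
  filter_upwards [hrate] with ω hω
  have hconv : Tendsto (fun n => Chat n ω) atTop (𝓝 C) :=
    tendsto_sub_nhds_zero_iff.1 (squeeze_zero_norm' (hω.mono fun _ hn => hn.le) hRlim)
  have hδlim : Tendsto δ atTop (𝓝 0) := by
    simpa [funext hδ] using hRlim.const_mul (1 + ε)
  have hδpos : ∀ᶠ n in atTop, 0 < δ n := hω.mono fun n hn => by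
    rw [hδ]
    exact mul_pos (by linarith) ((norm_nonneg _).trans_lt hn)
  exact Ψ.tendsto_iotaDim_atTop hinf hconv hδlim hδpos

/-- Under Assumption 1, if `⟨C, Ψ_l⟩ ≠ 0` for infinitely many `l`, then
almost surely `ι(Ĉ_n, δ_n) → ∞` as `n → ∞`. -/
theorem infinite_expansion_iota_tendsto_atTop
    {𝒮 : Type*} [NormedAddCommGroup 𝒮] [InnerProductSpace ℝ 𝒮]
    {Ω : Type*} [MeasurableSpace Ω] (ℙ : Measure Ω) [IsProbabilityMeasure ℙ]
    [MeasurableSpace 𝒮] [BorelSpace 𝒮]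
    (Ψ : HilbertBasis ℕ ℝ 𝒮)
    (Chat : ℕ → Ω → 𝒮) (hChat : ∀ n, Measurable (Chat n))
    (C : 𝒮)
    (R : ℕ → ℝ) (hRpos : ∀ n, 0 < R n) (hRanti : StrictAnti R)
    (hRlim : Tendsto R atTop (nhds 0))
    (hrate : ∀ᵐ ω ∂ℙ, ∀ᶠ n in atTop, ‖Chat n ω - C‖ < R n)
    (ε : ℝ) (hε : 0 < ε) (δ : ℕ → ℝ) (hδ : ∀ n, δ n = (1 + ε) * R n)
    (hinf : {l : ℕ | ⟪C, Ψ l⟫ ≠ 0}.Infinite) :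
    ∀ᵐ ω ∂ℙ, Tendsto (fun n => iotaDim Ψ (Chat n ω) (δ n)) atTop atTop :=
  infinite_expansion_iota_tendsto_atTop_general ℙ Ψ Chat C R hRlim hrate ε hε δ hδ hinf
end
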